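/- arXiv:math/0605287 — 3 statements merged into one kernel-verified Lean document; each statement's English description precedes it below -/
import Mathlib

section
/- Let (Y,d) be a weak metric space and j ≥ 2. For every κ = ((a_1,y_1),…,(a_j,y_j)) in F(ℝ × Y, j), the map φ̄_j(κ) = ((a_i − v(κ), a_i + v(κ), y_i))_{1≤i≤j} is a well-defined element of Cone(Y,j), and φ̄_j : F(ℝ × Y, j) → Cone(Y,j) is continuous. -/
open unitInterval Topology

noncomputable section

universe u v

/-! ### Basic configuration/cone sets -/

/-- The configuration set: tuples with pairwise distinct coordinates. -/
def ConfigSet (Z : Type*) (j : ℕ) : Set (Fin j → Z) :=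
  {f | Function.Injective f}

/-- `Cone(Y,j)`: tuples of triples `(a,b,y)` with `a < b` and, whenever two triples
carry the same point of `Y`, the corresponding intervals have disjoint interiors. -/
def ConeSet (Y : Type*) (j : ℕ) : Set (Fin j → ℝ × ℝ × Y) :=
  {f | (∀ i, (f i).1 < (f i).2.1) ∧
    ∀ k l, k ≠ l → (f k).2.2 = (f l).2.2 → (f k).2.1 ≤ (f l).1 ∨ (f l).2.1 ≤ (f k).1}

/-- A weak metric on a space `Y`. -/
structure IsWeakMetric {Y : Type*} [TopologicalSpace Y] (d : Y → Y → ℝ) : Prop where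
  continuous : Continuous fun p : Y × Y => d p.1 p.2
  nonneg : ∀ y y', 0 ≤ d y y'
  eq_zero_iff : ∀ y y', d y y' = 0 ↔ y = y'

/-- The auxiliary weak metric `g` on `ℝ × Y`. -/
def gfun {Y : Type*} (d : Y → Y → ℝ) (p q : ℝ × Y) : ℝ :=
  (1 / 2) * ((|p.1 - q.1| ^ 2 + d p.2 q.2) / (|p.1 - q.1| + d p.2 q.2 + 1))

/-- `v(κ) = min_{k ≠ l} g(κ k, κ l)`. -/
def vfun {Y : Type*} (d : Y → Y → ℝ) {j : ℕ} (κ : Fin j → ℝ × Y) : ℝ :=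
  ⨅ p : {p : Fin j × Fin j // p.1 ≠ p.2}, gfun d (κ p.1.1) (κ p.1.2)

/-- `φ_j`: sends each segment to its center point. -/
def centersFun {Y : Type*} {j : ℕ} (κ : Fin j → ℝ × ℝ × Y) : Fin j → ℝ × Y :=
  fun i => (((κ i).1 + (κ i).2.1) / 2, (κ i).2.2)

/-- `φ̄_j`: thickens each point into an interval of radius `v(κ)`. -/
def phibarFun {Y : Type*} (d : Y → Y → ℝ) {j : ℕ} (κ : Fin j → ℝ × Y) :
    Fin j → ℝ × ℝ × Y :=
  fun i => ((κ i).1 - vfun d κ, (κ i).1 + vfun d κ, (κ i).2)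

/-- `shrink_{s,t}`: linearly compress segments from `(0,1)` into `(s,t)`. -/
def shrinkFun {Y : Type*} (s t : ℝ) {j : ℕ} (κ : Fin j → ℝ × ℝ × Y) :
    Fin j → ℝ × ℝ × Y :=
  fun i => (s + (t - s) * (κ i).1, s + (t - s) * (κ i).2.1, (κ i).2.2)

theorem ConeSet.comp {Y : Type*} {i j : ℕ} {f : Fin j → ℝ × ℝ × Y} (hf : f ∈ ConeSet Y j)
    {ν : Fin i → Fin j} (hν : Function.Injective ν) : (f ∘ ν) ∈ ConeSet Y i :=
  ⟨fun k => hf.1 (ν k), fun k l hkl h => hf.2 (ν k) (ν l) (fun e => hkl (hν e)) h⟩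

/-! ### Labeled configuration spaces -/

/-- Generators for the equivalence relation defining `C(Y,X)`. -/
inductive ConfigRel (Y : Type u) (X : Type v) (x₀ : X) :
    (Σ j : ℕ, ↥(ConfigSet Y j) × (Fin j → X)) →
    (Σ j : ℕ, ↥(ConfigSet Y j) × (Fin j → X)) → Prop
  | mk {i j : ℕ} (ν : Fin i → Fin j) (hν : Function.Injective ν)
      (y : ↥(ConfigSet Y j)) (x : Fin i → X) :
      ConfigRel Y X x₀ ⟨i, ⟨y.1 ∘ ν, y.2.comp hν⟩, x⟩
        ⟨j, y, Function.extend ν x fun _ => x₀⟩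

/-- The labeled configuration space `C(Y, X)`. -/
def LabeledConfig (Y : Type u) (X : Type v) (x₀ : X) : Type (max u v) :=
  Quot (ConfigRel Y X x₀)

instance {Y : Type u} {X : Type v} {x₀ : X} [TopologicalSpace Y] [TopologicalSpace X] :
    TopologicalSpace (LabeledConfig Y X x₀) :=
  inferInstanceAs (TopologicalSpace (Quot (ConfigRel Y X x₀)))

/-- The empty configuration. -/
def emptyConfig (Y : Type u) : ↥(ConfigSet Y 0) :=
  ⟨Fin.elim0, Function.injective_of_subsingleton _⟩

/-- The basepoint of `C(Y,X)`: the empty configuration. -/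
def LabeledConfig.base (Y : Type u) (X : Type v) (x₀ : X) : LabeledConfig Y X x₀ :=
  Quot.mk _ ⟨0, emptyConfig Y, Fin.elim0⟩

/-- Generators for the equivalence relation defining `C₁(Y,X)`. -/
inductive Cone1Rel (Y : Type u) (X : Type v) (x₀ : X) :
    (Σ j : ℕ, ↥(ConeSet Y j) × (Fin j → X)) →
    (Σ j : ℕ, ↥(ConeSet Y j) × (Fin j → X)) → Prop
  | mk {i j : ℕ} (ν : Fin i → Fin j) (hν : Function.Injective ν)
      (κ : ↥(ConeSet Y j)) (x : Fin i → X) :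
      Cone1Rel Y X x₀ ⟨i, ⟨κ.1 ∘ ν, ConeSet.comp κ.2 hν⟩, x⟩
        ⟨j, κ, Function.extend ν x fun _ => x₀⟩

/-- The labeled space of segments `C₁(Y, X)`. -/
def LabeledCone (Y : Type u) (X : Type v) (x₀ : X) : Type (max u v) :=
  Quot (Cone1Rel Y X x₀)

instance {Y : Type u} {X : Type v} {x₀ : X} [TopologicalSpace Y] [TopologicalSpace X] :
    TopologicalSpace (LabeledCone Y X x₀) :=
  inferInstanceAs (TopologicalSpace (Quot (Cone1Rel Y X x₀)))

/-- `C̄₁(Y,X)` : classes of configurations of segments with endpoints in `(0,1)`. -/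
def BarC1Set (Y : Type u) (X : Type v) (x₀ : X) : Set (LabeledCone Y X x₀) :=
  {w | ∃ (j : ℕ) (κ : ↥(ConeSet Y j)) (x : Fin j → X),
    w = Quot.mk _ ⟨j, κ, x⟩ ∧ ∀ i, 0 < (κ.1 i).1 ∧ (κ.1 i).2.1 < 1}

/-! ### Suspension, cofibrations -/

/-- The relation collapsing `X × {0,1} ∪ {x₀} × I` to a point. -/
def SuspRel (X : Type v) (x₀ : X) : X × I → X × I → Prop := fun p q =>
  (p.2 = 0 ∨ p.2 = 1 ∨ p.1 = x₀) ∧ (q.2 = 0 ∨ q.2 = 1 ∨ q.1 = x₀)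

/-- The reduced suspension `ΣX`. -/
def Susp (X : Type v) (x₀ : X) : Type v :=
  Quot (SuspRel X x₀)

instance {X : Type v} {x₀ : X} [TopologicalSpace X] : TopologicalSpace (Susp X x₀) :=
  inferInstanceAs (TopologicalSpace (Quot (SuspRel X x₀)))

/-- The class `[x, t]` in `ΣX`. -/
def Susp.mk {X : Type v} (x₀ : X) (x : X) (t : I) : Susp X x₀ :=
  Quot.mk _ (x, t)

/-- The basepoint of `ΣX`. -/
def Susp.base {X : Type v} (x₀ : X) : Susp X x₀ :=
  Quot.mk _ (x₀, 0)

/-- A map is a cofibration if it has the homotopy extension property. -/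
def IsCofibration {A : Type*} {B : Type v} [TopologicalSpace A] [TopologicalSpace B]
    (φ : C(A, B)) : Prop :=
  ∀ (Z : Type v) (_ : TopologicalSpace Z) (f : C(B, Z)) (H : C(A × I, Z)),
    (∀ a, H (a, 0) = f (φ a)) →
    ∃ G : C(B × I, Z), (∀ b, G (b, 0) = f b) ∧ ∀ a t, G (φ a, t) = H (a, t)

/-- A based space is nondegenerately based if the inclusion of the basepoint
is a cofibration. -/
def NondegeneratelyBased {X : Type v} [TopologicalSpace X] (x₀ : X) : Prop :=
  IsCofibration ⟨fun _ : Unit => x₀, continuous_const⟩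

/-! ### Homotopy equivalences and weak homotopy equivalences -/

/-- A continuous map is a homotopy equivalence if it has a homotopy inverse. -/
def IsHomotopyEquiv {A : Type*} {B : Type*} [TopologicalSpace A] [TopologicalSpace B]
    (f : C(A, B)) : Prop :=
  ∃ g : C(B, A), (g.comp f).Homotopic (ContinuousMap.id A) ∧
    (f.comp g).Homotopic (ContinuousMap.id B)

/-- The map induced on path components by a continuous map. -/
def zerothHomotopyMap {A : Type*} {B : Type*} [TopologicalSpace A] [TopologicalSpace B]
    (f : C(A, B)) : ZerothHomotopy A → ZerothHomotopy B :=
  Quotient.map f fun _ _ h => ⟨h.somePath.map f.continuous⟩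

/-- The map induced on homotopy groups by a continuous map. -/
def homotopyGroupMap {A : Type*} {B : Type*} [TopologicalSpace A] [TopologicalSpace B]
    (f : C(A, B)) (N : Type*) (a : A) :
    HomotopyGroup N A a → HomotopyGroup N B (f a) :=
  Quotient.map (fun p => ⟨f.comp p.1, fun y hy => by
      simp only [ContinuousMap.comp_apply]
      exact congrArg f (p.2 y hy)⟩)
    fun p q h => h.map fun H => H.compContinuousMap f

/-- A continuous map is a weak homotopy equivalence if it induces a bijection on path
components and isomorphisms on all homotopy groups at every basepoint. -/
def IsWeakHomotopyEquiv {A : Type*} {B : Type*} [TopologicalSpace A] [TopologicalSpace B]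
    (f : C(A, B)) : Prop :=
  Function.Bijective (zerothHomotopyMap f) ∧
    ∀ (n : ℕ) (a : A), Function.Bijective (homotopyGroupMap f (Fin n) a)


section AuxStatement4

variable {Y : Type u} [TopologicalSpace Y]

lemma gfun_denom_pos (d : Y → Y → ℝ) (hd : IsWeakMetric d) (p q : ℝ × Y) :
    0 < |p.1 - q.1| + d p.2 q.2 + 1 := by
  have := abs_nonneg (p.1 - q.1)
  have := hd.nonneg p.2 q.2
  linarith

lemma gfun_pos (d : Y → Y → ℝ) (hd : IsWeakMetric d) {p q : ℝ × Y} (h : p ≠ q) :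
    0 < gfun d p q := by
  apply mul_pos (by norm_num)
  apply div_pos _ (gfun_denom_pos d hd p q)
  rcases eq_or_ne p.1 q.1 with h1 | h1
  · have h2 : p.2 ≠ q.2 := fun h2 => h (Prod.ext h1 h2)
    have : 0 < d p.2 q.2 :=
      lt_of_le_of_ne (hd.nonneg _ _) fun e => h2 ((hd.eq_zero_iff _ _).mp e.symm)
    have := sq_nonneg |p.1 - q.1|
    linarith
  · have : 0 < |p.1 - q.1| := abs_pos.mpr (sub_ne_zero.mpr h1)
    have := hd.nonneg p.2 q.2
    nlinarith

lemma gfun_le_half_abs (d : Y → Y → ℝ) (hd : IsWeakMetric d) {p q : ℝ × Y}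
    (h : p.2 = q.2) : gfun d p q ≤ |p.1 - q.1| / 2 := by
  have hd0 : d p.2 q.2 = 0 := (hd.eq_zero_iff _ _).mpr h
  have habs : (0:ℝ) ≤ |p.1 - q.1| := abs_nonneg _
  unfold gfun
  rw [hd0]
  rw [mul_comm, mul_one_div, div_div, div_le_div_iff₀ (by linarith) (by norm_num : (0:ℝ) < 2)]
  nlinarith

lemma gfun_continuous (d : Y → Y → ℝ) (hd : IsWeakMetric d) :
    Continuous fun pq : (ℝ × Y) × (ℝ × Y) => gfun d pq.1 pq.2 := by
  unfold gfun
  have hdc : Continuous fun pq : (ℝ × Y) × (ℝ × Y) => d pq.1.2 pq.2.2 :=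
    hd.continuous.comp ((continuous_snd.comp continuous_fst).prodMk
      (continuous_snd.comp continuous_snd))
  have habs : Continuous fun pq : (ℝ × Y) × (ℝ × Y) => |pq.1.1 - pq.2.1| :=
    ((continuous_fst.comp continuous_fst).sub (continuous_fst.comp continuous_snd)).abs
  exact continuous_const.mul (((habs.pow 2).add hdc).div ((habs.add hdc).add continuous_const)
    fun pq => (gfun_denom_pos d hd pq.1 pq.2).ne')

variable {j : ℕ}

lemma vfun_eq_inf' [Nonempty {p : Fin j × Fin j // p.1 ≠ p.2}] (d : Y → Y → ℝ)
    (κ : Fin j → ℝ × Y) :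
    vfun d κ = Finset.univ.inf' Finset.univ_nonempty
      (fun p : {p : Fin j × Fin j // p.1 ≠ p.2} => gfun d (κ p.1.1) (κ p.1.2)) :=
  (Finset.inf'_univ_eq_ciInf _).symm

lemma vfun_pos [Nonempty {p : Fin j × Fin j // p.1 ≠ p.2}] (d : Y → Y → ℝ)
    (hd : IsWeakMetric d) {κ : Fin j → ℝ × Y} (hκ : Function.Injective κ) :
    0 < vfun d κ := by
  rw [vfun_eq_inf', Finset.lt_inf'_iff]
  exact fun p _ => gfun_pos d hd (hκ.ne p.2)

lemma vfun_le [Nonempty {p : Fin j × Fin j // p.1 ≠ p.2}] (d : Y → Y → ℝ)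
    (κ : Fin j → ℝ × Y) {k l : Fin j} (hkl : k ≠ l) :
    vfun d κ ≤ gfun d (κ k) (κ l) := by
  rw [vfun_eq_inf']
  exact Finset.inf'_le _ (Finset.mem_univ (⟨(k, l), hkl⟩ :
    {p : Fin j × Fin j // p.1 ≠ p.2}))

end AuxStatement4

variable {Y : Type u} [TopologicalSpace Y]

set_option maxHeartbeats 1000000 in
theorem statement4 (d : Y → Y → ℝ) (hd : IsWeakMetric d) (j : ℕ) (hj : 2 ≤ j) :
    (∀ κ : Fin j → ℝ × Y, κ ∈ ConfigSet (ℝ × Y) j → phibarFun d κ ∈ ConeSet Y j) ∧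
    Continuous (fun κ : ↥(ConfigSet (ℝ × Y) j) => phibarFun d κ.1) := by
  have hne : Nonempty {p : Fin j × Fin j // p.1 ≠ p.2} :=
    ⟨⟨(⟨0, by omega⟩, ⟨1, by omega⟩), by simp [Fin.ext_iff]⟩⟩
  constructor
  · intro κ hκ
    have hv : 0 < vfun d κ := vfun_pos d hd hκ
    refine ⟨fun i => by simp [phibarFun]; linarith, fun k l hkl hy => ?_⟩
    have hle : vfun d κ ≤ |(κ k).1 - (κ l).1| / 2 :=
      (vfun_le d κ hkl).trans (gfun_le_half_abs d hd hy)
    simp only [phibarFun] at *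
    rcases abs_sub_le_iff.mp (le_of_eq (rfl : |(κ k).1 - (κ l).1| = _)) with ⟨h1, h2⟩
    rcases le_total (κ k).1 (κ l).1 with h | h
    · left
      have : |(κ k).1 - (κ l).1| = (κ l).1 - (κ k).1 := by
        rw [abs_sub_comm]; exact abs_of_nonneg (by linarith)
      linarith [this ▸ hle]
    · right
      have : |(κ k).1 - (κ l).1| = (κ k).1 - (κ l).1 := abs_of_nonneg (by linarith)
      linarith [this ▸ hle]
  · have hvc : Continuous fun κ : ↥(ConfigSet (ℝ × Y) j) => vfun d κ.1 := by
      have : (fun κ : ↥(ConfigSet (ℝ × Y) j) => vfun d κ.1) =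
          fun κ => Finset.univ.inf' Finset.univ_nonempty
            (fun p : {p : Fin j × Fin j // p.1 ≠ p.2} => gfun d (κ.1 p.1.1) (κ.1 p.1.2)) := by
        funext κ; exact vfun_eq_inf' d κ.1
      rw [this]
      exact Continuous.finset_inf'_apply
        (f := fun (p : {p : Fin j × Fin j // p.1 ≠ p.2}) (κ : ↥(ConfigSet (ℝ × Y) j)) =>
          gfun d (κ.1 p.1.1) (κ.1 p.1.2)) _ fun p _ => by
        have hc : Continuous fun κ : ↥(ConfigSet (ℝ × Y) j) => (κ.1 p.1.1, κ.1 p.1.2) :=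
          ((continuous_apply p.1.1).comp continuous_subtype_val).prodMk
            ((continuous_apply p.1.2).comp continuous_subtype_val)
        exact (gfun_continuous d hd).comp hc
    unfold phibarFun
    apply continuous_pi
    intro i
    have hev : Continuous fun κ : ↥(ConfigSet (ℝ × Y) j) => κ.1 i :=
      (continuous_apply i).comp continuous_subtype_val
    exact ((hev.fst.sub hvc).prodMk ((hev.fst.add hvc).prodMk hev.snd))


end
end

section
/- Let (Y,d) be a weak metric space, j ≥ 2, and κ = ((a_1,y_1),…,(a_j,y_j)) ∈ F(ℝ × Y, j). If k ≠ l and y_k = y_l, then |a_k − a_l| ≥ 2 v(κ); equivalently, either a_k + v(κ) ≤ a_l − v(κ) or a_l + v(κ) ≤ a_k − v(κ), so the closed intervals [a_k − v(κ), a_k + v(κ)] and [a_l − v(κ), a_l + v(κ)] do not overlap. -/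
open unitInterval Topology

noncomputable section

universe u v

variable {Y : Type u} [TopologicalSpace Y]

theorem statement11 (d : Y → Y → ℝ) (hd : IsWeakMetric d) (j : ℕ) (hj : 2 ≤ j)
    (κ : Fin j → ℝ × Y) (hκ : κ ∈ ConfigSet (ℝ × Y) j)
    (k l : Fin j) (hkl : k ≠ l) (hy : (κ k).2 = (κ l).2) :
    2 * vfun d κ ≤ |(κ k).1 - (κ l).1| ∧
    ((κ k).1 + vfun d κ ≤ (κ l).1 - vfun d κ ∨
      (κ l).1 + vfun d κ ≤ (κ k).1 - vfun d κ) := by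
  have hg0 : ∀ p q : ℝ × Y, 0 ≤ gfun d p q := by
    intro p q
    have h1 : 0 ≤ |p.1 - q.1| ^ 2 + d p.2 q.2 := by
      have := hd.nonneg p.2 q.2; have := sq_nonneg (p.1 - q.1); rw [sq_abs]; linarith
    have h2 : 0 < |p.1 - q.1| + d p.2 q.2 + 1 := by
      have := hd.nonneg p.2 q.2; have := abs_nonneg (p.1 - q.1); linarith
    exact mul_nonneg (by norm_num) (div_nonneg h1 h2.le)
  have hv : vfun d κ ≤ gfun d (κ k) (κ l) :=
    ciInf_le ⟨0, fun x ⟨p, hp⟩ => hp ▸ hg0 _ _⟩ (⟨(k, l), hkl⟩ : {p : Fin j × Fin j // p.1 ≠ p.2})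
  have hd0 : d (κ k).2 (κ l).2 = 0 := (hd.eq_zero_iff _ _).mpr hy
  set A := |(κ k).1 - (κ l).1| with hA
  have hA0 : 0 ≤ A := abs_nonneg _
  have hgle : 2 * gfun d (κ k) (κ l) ≤ A := by
    rw [gfun, hd0]
    have hpos : 0 < A + 0 + 1 := by linarith
    rw [← hA]
    have : (A ^ 2 + 0) / (A + 0 + 1) ≤ A := by
      rw [div_le_iff₀ hpos]; nlinarith
    linarith
  have h1 : 2 * vfun d κ ≤ A := by linarith
  refine ⟨h1, ?_⟩
  rcases le_abs.mp h1 with h | h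
  · right; linarith
  · left; linarith


end
end

section
/- Let Y be a weak metric space and X a nondegenerately based topological space. The space E_1(Y,X) is contractible. -/
open unitInterval Topology

noncomputable section

universe u v

theorem castAdd_inj {j k : ℕ} : Function.Injective (Fin.castAdd k : Fin j → Fin (j + k)) :=
  fun a b h => Fin.ext (by simpa using congrArg Fin.val h)

/-- Generators of the relation defining `E₁(Y,X)`: segments entirely above level `s`
may be deleted. -/
inductive E1Rel (Y : Type u) (X : Type v) [TopologicalSpace Y] [TopologicalSpace X] (x₀ : X) :
    ↥(BarC1Set Y X x₀) × I → ↥(BarC1Set Y X x₀) × I → Prop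
  | mk {j k : ℕ} (κ : ↥(ConeSet Y (j + k))) (x : Fin (j + k) → X)
      (hb : ∀ i, 0 < (κ.1 i).1 ∧ (κ.1 i).2.1 < 1) (s : I)
      (hs : ∀ i : Fin k, (s : ℝ) ≤ (κ.1 (Fin.natAdd j i)).1) :
      E1Rel Y X x₀
        (⟨Quot.mk _ ⟨j + k, κ, x⟩, j + k, κ, x, rfl, hb⟩, s)
        (⟨Quot.mk _ ⟨j, ⟨κ.1 ∘ Fin.castAdd k, ConeSet.comp κ.2 castAdd_inj⟩,
            x ∘ Fin.castAdd k⟩,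
          j, ⟨κ.1 ∘ Fin.castAdd k, ConeSet.comp κ.2 castAdd_inj⟩, x ∘ Fin.castAdd k, rfl,
          fun i => hb (Fin.castAdd k i)⟩, s)

/-- The space `E₁(Y,X)`. -/
def E1Space (Y : Type u) (X : Type v) [TopologicalSpace Y] [TopologicalSpace X] (x₀ : X) :
    Type (max u v) :=
  Quot (E1Rel Y X x₀)

instance {Y : Type u} {X : Type v} [TopologicalSpace Y] [TopologicalSpace X] {x₀ : X} :
    TopologicalSpace (E1Space Y X x₀) :=
  inferInstanceAs (TopologicalSpace (Quot (E1Rel Y X x₀)))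

/-! Multiplying the level `s` by `t ∈ [0,1]` respects the relation defining `E₁(Y,X)`, since a
segment lying above level `s` also lies above level `t * s`. This gives a homotopy from the
identity (`t = 1`) to the map sending everything to level `0`, where every segment lies above the
level and can be deleted, leaving the empty configuration. Continuity in both variables holds
because taking the product with the locally compact `I` preserves quotient maps. -/

def emptyCone (Y : Type u) : ↥(ConeSet Y 0) :=
  ⟨Fin.elim0, fun i => i.elim0, fun k => k.elim0⟩

theorem E1Rel.mul_level {Y : Type u} {X : Type v} [TopologicalSpace Y] [TopologicalSpace X]
    {x₀ : X} (t : I) {p q : ↥(BarC1Set Y X x₀) × I} (h : E1Rel Y X x₀ p q) :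
    E1Rel Y X x₀ (p.1, t * p.2) (q.1, t * q.2) := by
  obtain ⟨κ, x, hb, s, hs⟩ := h
  exact E1Rel.mk κ x hb (t * s) fun i => (mul_le_of_le_one_left s.2.1 t.2.2).trans (hs i)

namespace E1Space

variable {Y : Type u} {X : Type v} [TopologicalSpace Y] [TopologicalSpace X] {x₀ : X}

variable (Y X x₀) in
def base : E1Space Y X x₀ :=
  Quot.mk _ (⟨Quot.mk _ ⟨0, emptyCone Y, Fin.elim0⟩, 0, emptyCone Y, Fin.elim0, rfl,
    fun i => i.elim0⟩, 0)

theorem mk_zero (w : ↥(BarC1Set Y X x₀)) : Quot.mk (E1Rel Y X x₀) (w, 0) = base Y X x₀ := by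
  obtain ⟨w, j, κ, x, rfl, hb⟩ := w
  obtain ⟨k, rfl⟩ : ∃ k, j = 0 + k := ⟨j, (zero_add j).symm⟩
  refine (Quot.sound (E1Rel.mk κ x hb 0 fun i => (hb _).1.le)).trans ?_
  have hκ : (⟨κ.1 ∘ Fin.castAdd k, ConeSet.comp κ.2 castAdd_inj⟩ : ↥(ConeSet Y 0)) =
      emptyCone Y := Subtype.ext (funext fun i => i.elim0)
  have hx : x ∘ Fin.castAdd k = Fin.elim0 := funext fun i => i.elim0
  simp only [hκ, hx]
  rfl

def scaleLevel (t : I) : E1Space Y X x₀ → E1Space Y X x₀ :=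
  Quot.map (fun p => (p.1, t * p.2)) fun _ _ => E1Rel.mul_level t

@[simp]
theorem scaleLevel_mk (t : I) (w : ↥(BarC1Set Y X x₀)) (s : I) :
    scaleLevel t (Quot.mk _ (w, s)) = Quot.mk _ (w, t * s) :=
  rfl

theorem continuous_scaleLevel :
    Continuous fun p : I × E1Space Y X x₀ => scaleLevel p.1 p.2 :=
  isQuotientMap_quot_mk.continuous_lift_prod_right <|
    continuous_quot_mk.comp <|
      continuous_snd.fst.prodMk (continuous_fst.mul continuous_snd.snd)

def contraction :
    ContinuousMap.Homotopy (ContinuousMap.id (E1Space Y X x₀))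
      (ContinuousMap.const _ (base Y X x₀)) where
  toFun p := scaleLevel (σ p.1) p.2
  continuous_toFun :=
    continuous_scaleLevel.comp ((continuous_symm.comp continuous_fst).prodMk continuous_snd)
  map_zero_left := Quot.ind fun ⟨w, s⟩ => by
    simp only [symm_zero, scaleLevel_mk, one_mul]; rfl
  map_one_left := Quot.ind fun ⟨w, s⟩ => by
    simp only [symm_one, scaleLevel_mk, zero_mul, mk_zero]; rfl

end E1Space

theorem statement16_general {Y : Type u} {X : Type v} [TopologicalSpace Y] [TopologicalSpace X]
    (x₀ : X) :
    ContractibleSpace (E1Space Y X x₀) :=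
  (contractible_iff_id_nullhomotopic _).2 ⟨_, ⟨E1Space.contraction⟩⟩

theorem statement16 {Y : Type u} {X : Type v} [TopologicalSpace Y] [TopologicalSpace X]
    (d : Y → Y → ℝ) (hd : IsWeakMetric d) (x₀ : X) (hX : NondegeneratelyBased x₀) :
    ContractibleSpace (E1Space Y X x₀) :=
  statement16_general x₀

end
end
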